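/- Let n, ℓ be positive integers with gcd(n, ℓ) = 1. Then the class function on S_n given by σ ↦ ℓ^{m(σ) − 1}, where m(σ) is the number of cycles of σ, is the character of a finite-dimensional complex representation of S_n. -/

import Mathlib

/-- The multiset of cycle lengths of a permutation, counting fixed points as 1-cycles. -/
def cycleLengths {n : ℕ} (σ : Equiv.Perm (Fin n)) : Multiset ℕ :=
  σ.cycleType + Multiset.replicate (n - σ.support.card) 1

/-- The number of cycles of a permutation, counting fixed points as 1-cycles. -/
def numCycles {n : ℕ} (σ : Equiv.Perm (Fin n)) : ℕ :=
  Multiset.card (cycleLengths σ)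

section Aux

open Equiv Equiv.Perm

variable {n ℓ : ℕ}

/-- The type of zero-sum vectors in `(ZMod ℓ)^n`. -/
def ZS (n ℓ : ℕ) : Type := {v : Fin n → ZMod ℓ // ∑ i, v i = 0}

instance [NeZero ℓ] : Fintype (ZS n ℓ) := by unfold ZS; infer_instance
instance : DecidableEq (ZS n ℓ) := by unfold ZS; infer_instance

/-- Action of a permutation on zero-sum vectors by precomposition. -/
def zsAct (σ : Equiv.Perm (Fin n)) (x : ZS n ℓ) : ZS n ℓ :=
  ⟨fun i => x.1 (σ i), by rw [Equiv.sum_comp σ x.1]; exact x.2⟩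

lemma zsAct_comp (σ τ : Equiv.Perm (Fin n)) (x : ZS n ℓ) :
    zsAct (σ * τ) x = zsAct τ (zsAct σ x) := rfl

/-- The permutation representation of `S_n` on `ℂ[ZS n ℓ]`. -/
noncomputable def zsRep (n ℓ : ℕ) : Representation ℂ (Equiv.Perm (Fin n)) (ZS n ℓ → ℂ) where
  toFun σ := LinearMap.funLeft ℂ ℂ (zsAct σ)
  map_one' := by
    ext v x
    simp [LinearMap.funLeft_apply, zsAct]
    rfl
  map_mul' σ τ := by
    ext v x
    simp [LinearMap.funLeft_apply, zsAct_comp, Module.End.mul_apply]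

/-- The representation as an `FDRep`. -/
noncomputable def zsV (n ℓ : ℕ) [NeZero ℓ] : FDRep ℂ (Equiv.Perm (Fin n)) :=
  FDRep.of (zsRep n ℓ)

lemma zsV_char [NeZero ℓ] (σ : Equiv.Perm (Fin n)) :
    (zsV n ℓ).character σ = Fintype.card {x : ZS n ℓ // zsAct σ x = x} := by
  show LinearMap.trace ℂ _ (LinearMap.funLeft ℂ ℂ (zsAct σ)) = _
  rw [LinearMap.trace_eq_matrix_trace ℂ (Pi.basisFun ℂ (ZS n ℓ)), Matrix.trace]
  simp [Matrix.diag, LinearMap.toMatrix_apply, LinearMap.funLeft_apply, Pi.basisFun_apply,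
    Pi.basisFun_repr, Pi.single_apply, Fintype.card_subtype, Finset.sum_ite_eq]

/-- The same-cycle setoid of a permutation. -/
def sc (σ : Equiv.Perm (Fin n)) : Setoid (Fin n) :=
  ⟨SameCycle σ, ⟨SameCycle.refl σ, SameCycle.symm, SameCycle.trans⟩⟩

noncomputable def qfun (σ : Equiv.Perm (Fin n)) (x : Fin n) :
    ({c // c ∈ σ.cycleFactorsFinset} ⊕ {x : Fin n // σ x = x}) :=
  if h : σ x = x then Sum.inr ⟨x, h⟩
  else Sum.inl ⟨σ.cycleOf x, cycleOf_mem_cycleFactorsFinset_iff.2 (mem_support.2 h)⟩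

lemma qfun_resp (σ : Equiv.Perm (Fin n)) {a b : Fin n} (hab : SameCycle σ a b) :
    qfun σ a = qfun σ b := by
  by_cases ha : σ a = a
  · obtain rfl := hab.eq_of_left ha
    rfl
  · have hb : ¬ σ b = b := fun hb => ha ((hab.eq_of_right hb) ▸ hb)
    unfold qfun
    rw [dif_neg ha, dif_neg hb]
    exact congrArg _ (Subtype.ext hab.cycleOf_eq)

noncomputable def qmap (σ : Equiv.Perm (Fin n)) :
    Quotient (sc σ) → ({c // c ∈ σ.cycleFactorsFinset} ⊕ {x : Fin n // σ x = x}) :=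
  Quotient.lift (qfun σ) fun _ _ h => qfun_resp σ h

lemma qmap_bij (σ : Equiv.Perm (Fin n)) : Function.Bijective (qmap σ) := by
  constructor
  · rintro ⟨a⟩ ⟨b⟩ h
    apply Quotient.sound
    change qfun σ a = qfun σ b at h
    unfold qfun at h
    by_cases ha : σ a = a <;> by_cases hb : σ b = b
    · rw [dif_pos ha, dif_pos hb] at h
      obtain rfl : a = b := congrArg Subtype.val (Sum.inr.inj h)
      exact SameCycle.refl σ a
    · rw [dif_pos ha, dif_neg hb] at h; exact absurd h (by simp)
    · rw [dif_neg ha, dif_pos hb] at h; exact absurd h (by simp)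
    · rw [dif_neg ha, dif_neg hb] at h
      have hco : σ.cycleOf a = σ.cycleOf b := congrArg Subtype.val (Sum.inl.inj h)
      have : b ∈ (σ.cycleOf a).support := by
        rw [hco]
        exact mem_support_cycleOf_iff.2 ⟨SameCycle.refl σ b, mem_support.2 hb⟩
      exact (mem_support_cycleOf_iff.1 this).1
  · rintro (⟨c, hc⟩ | ⟨x, hx⟩)
    · obtain ⟨x, hxc⟩ := (mem_cycleFactorsFinset_iff.1 hc).1.nonempty_support.exists_mem
      have hxs : x ∈ σ.support := mem_cycleFactorsFinset_support_le hc hxc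
      refine ⟨Quotient.mk _ x, ?_⟩
      change qfun σ x = _
      rw [qfun, dif_neg (mem_support.1 hxs)]
      exact congrArg _ (Subtype.ext (cycle_is_cycleOf hxc hc).symm)
    · exact ⟨Quotient.mk _ x, by change qfun σ x = _; rw [qfun, dif_pos hx]⟩

lemma card_quot (σ : Equiv.Perm (Fin n)) : Nat.card (Quotient (sc σ)) = numCycles σ := by
  rw [Nat.card_eq_of_bijective _ (qmap_bij σ)]
  rw [Nat.card_sum, Nat.card_eq_fintype_card, Nat.card_eq_fintype_card]
  have h1 : Fintype.card {c // c ∈ σ.cycleFactorsFinset} = σ.cycleFactorsFinset.card :=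
    Fintype.card_coe _
  have h2 : Fintype.card {x : Fin n // σ x = x} = n - σ.support.card := by
    rw [Fintype.card_subtype]
    have : Finset.univ.filter (fun x => σ x = x) = σ.supportᶜ := by
      ext x; simp [Equiv.Perm.mem_support]
    rw [this, Finset.card_compl, Fintype.card_fin]
  rw [h1, h2]
  unfold numCycles cycleLengths
  rw [Multiset.card_add, Multiset.card_replicate]
  congr 1
  simp [Equiv.Perm.cycleType]

/-- The subgroup of vectors fixed by (precomposition with) σ. -/
def FixSub (ℓ : ℕ) (σ : Equiv.Perm (Fin n)) : AddSubgroup (Fin n → ZMod ℓ) where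
  carrier := {v | ∀ i, v (σ i) = v i}
  zero_mem' := fun _ => rfl
  add_mem' ha hb := fun i => by simp [ha i, hb i]
  neg_mem' ha := fun i => by simp [ha i]

lemma fix_zpow {σ : Equiv.Perm (Fin n)} {v : Fin n → ZMod ℓ} (hv : ∀ i, v (σ i) = v i)
    (k : ℤ) (a : Fin n) : v ((σ ^ k) a) = v a := by
  have hinv : ∀ i, v (σ⁻¹ i) = v i := fun i => by
    conv_rhs => rw [← show σ (σ⁻¹ i) = i from Equiv.apply_symm_apply σ i, hv]
  induction k using Int.induction_on with
  | zero => simp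
  | succ k ih => rw [show ((k : ℤ) + 1) = 1 + k by ring, zpow_add, zpow_one,
      Equiv.Perm.mul_apply, hv, ih]
  | pred k ih => rw [show (-(k : ℤ) - 1) = -1 + -k by ring, zpow_add, zpow_neg_one,
      Equiv.Perm.mul_apply, hinv, ih]

noncomputable def fixEquiv (σ : Equiv.Perm (Fin n)) :
    FixSub ℓ σ ≃ (Quotient (sc σ) → ZMod ℓ) where
  toFun w := Quotient.lift w.1 (by
    rintro a b ⟨k, hk⟩
    rw [← hk, fix_zpow w.2])
  invFun f := ⟨fun i => f (Quotient.mk _ i), fun i =>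
    congrArg f (Quotient.sound ((sameCycle_apply_right.2 (SameCycle.refl σ i)).symm))⟩
  left_inv w := rfl
  right_inv f := by
    funext q
    induction q using Quotient.ind
    rfl

/-- Summation homomorphism on the fixed subgroup. -/
noncomputable def sHom (σ : Equiv.Perm (Fin n)) : FixSub ℓ σ →+ ZMod ℓ where
  toFun w := ∑ i, w.1 i
  map_zero' := by simp
  map_add' a b := by simp [Finset.sum_add_distrib]

lemma sHom_surj (hcop : Nat.Coprime n ℓ) (σ : Equiv.Perm (Fin n)) :
    Function.Surjective (sHom (ℓ := ℓ) σ) := by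
  intro z
  refine ⟨⟨fun _ => ((ZMod.unitOfCoprime n hcop)⁻¹ : (ZMod ℓ)ˣ) * z, fun _ => rfl⟩, ?_⟩
  show ∑ _i : Fin n, ((ZMod.unitOfCoprime n hcop)⁻¹ : (ZMod ℓ)ˣ) * z = z
  rw [Finset.sum_const, Finset.card_univ, Fintype.card_fin, nsmul_eq_mul, ← mul_assoc,
    ← ZMod.coe_unitOfCoprime n hcop, ← Units.val_mul, mul_inv_cancel, Units.val_one, one_mul]

lemma card_ker_mul (hcop : Nat.Coprime n ℓ) (σ : Equiv.Perm (Fin n)) :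
    Nat.card (sHom (ℓ := ℓ) σ).ker * ℓ = Nat.card (FixSub ℓ σ) := by
  rw [AddSubgroup.card_eq_card_quotient_mul_card_addSubgroup (sHom (ℓ := ℓ) σ).ker,
    Nat.card_congr (QuotientAddGroup.quotientKerEquivOfSurjective _ (sHom_surj hcop σ)).toEquiv,
    Nat.card_zmod, mul_comm]

/-- The fixed points of σ on `ZS n ℓ` correspond to the kernel of `sHom`. -/
def fixedZSEquiv (σ : Equiv.Perm (Fin n)) :
    {x : ZS n ℓ // zsAct σ x = x} ≃ (sHom (ℓ := ℓ) σ).ker where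
  toFun p := ⟨⟨p.1.1, fun i => congrFun (congrArg Subtype.val p.2) i⟩, p.1.2⟩
  invFun q := ⟨⟨q.1.1, q.2⟩, Subtype.ext (funext fun i => q.1.2 i)⟩
  left_inv p := rfl
  right_inv q := rfl

end Aux

/-- If `gcd(n, ℓ) = 1`, the class function `σ ↦ ℓ^{m(σ) - 1}` on `S_n` is the character
of a finite-dimensional complex representation. -/
theorem char_of_coprime {n ℓ : ℕ} (hn : 0 < n) (hℓ : 0 < ℓ) (hcop : Nat.Coprime n ℓ) :
    ∃ V : FDRep ℂ (Equiv.Perm (Fin n)),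
      ∀ σ : Equiv.Perm (Fin n), V.character σ = (ℓ : ℂ) ^ (numCycles σ - 1) := by
  haveI : NeZero ℓ := ⟨hℓ.ne'⟩
  refine ⟨zsV n ℓ, fun σ => ?_⟩
  rw [zsV_char σ]
  have key : Fintype.card {x : ZS n ℓ // zsAct σ x = x} = ℓ ^ (numCycles σ - 1) := by
    have h1 : Nat.card {x : ZS n ℓ // zsAct σ x = x} = Nat.card (sHom (ℓ := ℓ) σ).ker :=
      Nat.card_congr (fixedZSEquiv σ)
    have h2 : Nat.card (FixSub ℓ σ) = ℓ ^ numCycles σ := by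
      rw [Nat.card_congr (fixEquiv σ), Nat.card_fun, Nat.card_zmod, card_quot]
    have hm : 1 ≤ numCycles σ := by
      rw [← card_quot σ]
      haveI : Nonempty (Fin n) := Fin.pos_iff_nonempty.1 hn
      haveI : Nonempty (Quotient (sc σ)) := ⟨Quotient.mk _ (Classical.arbitrary _)⟩
      exact Nat.card_pos
    have h3 : Nat.card (sHom (ℓ := ℓ) σ).ker * ℓ = ℓ ^ (numCycles σ - 1) * ℓ := by
      rw [card_ker_mul hcop σ, h2, ← pow_succ, Nat.sub_add_cancel hm]
    have h4 := Nat.eq_of_mul_eq_mul_right hℓ h3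
    rw [← Nat.card_eq_fintype_card, h1, h4]
  rw [key]
  push_cast
  ring
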